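/- For any x in c_00(ω^{[k]}) whose support has exactly n elements, the sequence of norms |x|_j defined recursively by |x|_0 = max |x_v| and |x|_{j+1} = max{ |x|_j, θ · max{ Σ_{i=1}^m |E_i x|_j : 1 ≤ m ≤ d, E_1 < … < E_m admissible sets in AR^k } } stabilizes at stage n: |x|_n = |x|_{n+1} = |x|_{n+2} = …. -/

import Mathlib

/-- Non-decreasing list of naturals. -/
abbrev NonDec (l : List ℕ) : Prop := l.Chain' (· ≤ ·)

/-- The order `≺` on nondecreasing sequences: the empty sequence is minimal;
nonempty sequences are compared by last entry, with lexicographic tie-breaking. -/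
def prec (s t : List ℕ) : Prop :=
  (s = [] ∧ t ≠ []) ∨
  (s ≠ [] ∧ t ≠ [] ∧ (s.getLast! < t.getLast! ∨
    (s.getLast! = t.getLast! ∧ List.Lex (· < ·) s t)))

/-- The map `X̂_v`: `(m_1,…,m_l) ↦ (f_1(m_1),…,f_l(m_l))` where
`f_j(0) = n_j` and `f_j(m) = n_k + m` for `m ≥ 1`, `v = (n_1,…,n_k)`. -/
def Xhat (v s : List ℕ) : List ℕ :=
  List.zipWith (fun a b => if b = 0 then a else v.getLast! + b) (v.take s.length) s

/-- The set `X_v^max`, described by its characterization: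
`w ∈ X_v^max` iff `w` is nondecreasing of the same length as `v` and either
`w_1 > n_k`, or there is `1 ≤ i ≤ k` with `(w_1,…,w_i) = (n_1,…,n_i)` and
(if `i < k`) `w_{i+1} > n_k`. -/
def XmaxSet (v : List ℕ) : Set (List ℕ) :=
  { w | w.length = v.length ∧ NonDec w ∧
    (v.getLast! < w.headI ∨
      ∃ i, 1 ≤ i ∧ i ≤ v.length ∧ w.take i = v.take i ∧
        (i < v.length → v.getLast! < w.getD i 0)) }

/-- An `E_k`-tree: a map on `ω^{≤k}` sending nondecreasing sequences of length `≤ k`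
to nondecreasing sequences of the same length, preserving `≺` and initial segments. -/
def IsEkTree (k : ℕ) (X : List ℕ → List ℕ) : Prop :=
  (∀ s, NonDec s → s.length ≤ k → NonDec (X s) ∧ (X s).length = s.length) ∧
  (∀ s t, NonDec s → NonDec t → s.length ≤ k → t.length ≤ k →
    (prec s t → prec (X s) (X t)) ∧ (s <+: t → X s <+: X t))

/-- `E ∈ AR^k`: `E` is a finite `≺`-initial segment of the restriction to `ω^{[k]}`
of some `E_k`-tree. -/
def memAR (k : ℕ) (E : Finset (List ℕ)) : Prop :=
  ∃ X : List ℕ → List ℕ, IsEkTree k X ∧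
    (∀ e ∈ E, ∃ s, NonDec s ∧ s.length = k ∧ e = X s) ∧
    (∀ s, NonDec s → s.length = k → ∀ e ∈ E, prec (X s) e → X s ∈ E)

/-- `ω^{[k]}`: nondecreasing sequences of naturals of length exactly `k`. -/
abbrev Vec (k : ℕ) := {l : List ℕ // NonDec l ∧ l.length = k}

/-- Restriction `Ex` of a finitely supported vector to a set of coordinates. -/
noncomputable def restrict {k : ℕ} (E : Finset (Vec k)) (x : Vec k →₀ ℝ) : Vec k →₀ ℝ :=
  x.filter (fun v => v ∈ E)

/-- `A < B`: every element of `A` is `≺`-below every element of `B`. -/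
def Successive {k : ℕ} (A B : Finset (Vec k)) : Prop :=
  ∀ a ∈ A, ∀ b ∈ B, prec a.1 b.1

/-- Membership in `AR^k` for finite sets of elements of `ω^{[k]}`. -/
def memARV (k : ℕ) (E : Finset (Vec k)) : Prop :=
  memAR k (E.image Subtype.val)

/-- A `d`-admissible sequence: at most `d` many `≺`-successive members of `AR^k`. -/
def Admissible (k d : ℕ) {m : ℕ} (E : Fin m → Finset (Vec k)) : Prop :=
  m ≤ d ∧ (∀ i, memARV k (E i)) ∧ ∀ i j, i < j → Successive (E i) (E j)

/-- The nondecreasing sequence of norms `|x|_j` defining the Tsirelson-type norm: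
`|x|_0 = max |x_v|`, and `|x|_{j+1}` is the max of `|x|_j` and
`θ ∑ |E_i x|_j` over admissible sequences `(E_i)_{i=1}^m`, `1 ≤ m ≤ d`. -/
noncomputable def normSeq (k d : ℕ) (θ : ℝ) : ℕ → (Vec k →₀ ℝ) → ℝ
  | 0, x => ⨆ v, |x v|
  | j + 1, x => max (normSeq k d θ j x)
      (sSup { r | ∃ m : ℕ, 1 ≤ m ∧ ∃ E : Fin m → Finset (Vec k),
        Admissible k d E ∧ r = θ * ∑ i, normSeq k d θ j (restrict (E i) x) })

/-- The norm of `T_k(d,θ)` on finitely supported vectors. -/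
noncomputable def tnorm (k d : ℕ) (θ : ℝ) (x : Vec k →₀ ℝ) : ℝ :=
  ⨆ j, normSeq k d θ j x


/-!
Every `|·|_j` is bounded by the `ℓ¹` norm, so the suprema in the recursion are finite.
We show `|x|_{j+1} = |x|_j` once `j ≥ |supp x|`, by induction on `j`. Take an admissible
`(E_i)`. If one `E_i` contains the support of `x`, the others miss it, and the admissible sum is
`θ |x|_j ≤ |x|_j`. Otherwise every `E_i x` has strictly smaller support, hence
`|E_i x|_j = |E_i x|_{j-1}` by induction, and the admissible sum is one of those already
allowed at stage `j`, so it is at most `|x|_j`.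
-/

open Function

lemma prec_irrefl (s : List ℕ) : ¬ prec s s := by
  rintro (⟨h1, h2⟩ | ⟨-, -, h | ⟨-, h⟩⟩)
  · exact h2 h1
  · exact lt_irrefl _ h
  · exact asymm h h

section L1Norm

variable {α : Type*}

noncomputable def l1Norm (x : α →₀ ℝ) : ℝ := ∑ v ∈ x.support, |x v|

lemma l1Norm_nonneg (x : α →₀ ℝ) : 0 ≤ l1Norm x :=
  Finset.sum_nonneg fun _ _ => abs_nonneg _

@[simp]
lemma l1Norm_zero : l1Norm (0 : α →₀ ℝ) = 0 := by
  simp [l1Norm]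

lemma abs_apply_le_l1Norm (x : α →₀ ℝ) (v : α) : |x v| ≤ l1Norm x := by
  by_cases hv : v ∈ x.support
  · exact Finset.single_le_sum (fun w _ => abs_nonneg (x w)) hv
  · rw [Finsupp.notMem_support_iff.mp hv, abs_zero]
    exact l1Norm_nonneg x

lemma l1Norm_filter (p : α → Prop) [DecidablePred p] (x : α →₀ ℝ) :
    l1Norm (x.filter p) = ∑ v ∈ x.support.filter p, |x v| := by
  rw [l1Norm, Finsupp.support_filter]
  exact Finset.sum_congr rfl fun v hv => by
    rw [Finsupp.filter_apply_pos _ _ (Finset.mem_filter.mp hv).2]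

lemma sum_l1Norm_filter_mem_le {ι : Type*} [Fintype ι] [DecidableEq α] {E : ι → Finset α}
    (hE : Pairwise (Disjoint on E)) (x : α →₀ ℝ) :
    ∑ i, l1Norm (x.filter (· ∈ E i)) ≤ l1Norm x := by
  have hdisj : (↑(Finset.univ : Finset ι) : Set ι).PairwiseDisjoint
      fun i => x.support.filter (· ∈ E i) := fun i _ j _ hij =>
    (hE hij).mono (fun _ hv => (Finset.mem_filter.mp hv).2) fun _ hv => (Finset.mem_filter.mp hv).2
  calc ∑ i, l1Norm (x.filter (· ∈ E i))
      = ∑ v ∈ Finset.univ.biUnion fun i => x.support.filter (· ∈ E i), |x v| := by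
        rw [Finset.sum_biUnion hdisj]
        exact Finset.sum_congr rfl fun i _ => l1Norm_filter _ x
    _ ≤ l1Norm x :=
        Finset.sum_le_sum_of_subset_of_nonneg
          (Finset.biUnion_subset.mpr fun _ _ => Finset.filter_subset _ _)
          (fun _ _ _ => abs_nonneg _)

end L1Norm

section Restrict

variable {k : ℕ}

lemma restrict_eq_zero_of_disjoint {E : Finset (Vec k)} {x : Vec k →₀ ℝ}
    (h : Disjoint x.support E) : restrict E x = 0 := by
  ext v
  rw [restrict, Finsupp.filter_apply]
  split_ifs with hv
  · exact Finsupp.notMem_support_iff.mp fun hs => Finset.disjoint_left.mp h hs hv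
  · rfl

lemma restrict_eq_self_of_subset {E : Finset (Vec k)} {x : Vec k →₀ ℝ}
    (h : x.support ⊆ E) : restrict E x = x :=
  (Finsupp.filter_eq_self_iff _ _).mpr fun _ hv => h (Finsupp.mem_support_iff.mpr hv)

lemma card_support_restrict_lt {E : Finset (Vec k)} {x : Vec k →₀ ℝ}
    (h : ¬ x.support ⊆ E) : (restrict E x).support.card < x.support.card := by
  rw [restrict, Finsupp.support_filter]
  refine Finset.card_lt_card (Finset.filter_ssubset.mpr ?_)
  simpa [Finset.not_subset] using h

lemma Successive.disjoint {A B : Finset (Vec k)} (h : Successive A B) : Disjoint A B :=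
  Finset.disjoint_left.mpr fun {v} hA hB => prec_irrefl v.1 (h v hA v hB)

lemma Admissible.pairwise_disjoint {d m : ℕ} {E : Fin m → Finset (Vec k)}
    (hE : Admissible k d E) : Pairwise (Disjoint on E) := fun i j hij =>
  hij.lt_or_gt.elim (fun h => (hE.2.2 i j h).disjoint)
    fun h => (hE.2.2 j i h).disjoint.symm

lemma sum_restrict_eq_of_support_subset {m : ℕ} {E : Fin m → Finset (Vec k)}
    (hE : Pairwise (Disjoint on E)) {f : (Vec k →₀ ℝ) → ℝ} (hf : f 0 = 0) {x : Vec k →₀ ℝ}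
    {i : Fin m} (hi : x.support ⊆ E i) : ∑ i', f (restrict (E i') x) = f x := by
  rw [Finset.sum_eq_single i, restrict_eq_self_of_subset hi]
  · intro i' _ hne
    rw [restrict_eq_zero_of_disjoint ((hE hne.symm).mono_left hi), hf]
  · exact fun h => absurd (Finset.mem_univ i) h

lemma mul_sum_restrict_le_l1Norm {m : ℕ} {E : Fin m → Finset (Vec k)}
    (hE : Pairwise (Disjoint on E)) {θ : ℝ} (hθ0 : 0 ≤ θ) (hθ1 : θ ≤ 1)
    {f : (Vec k →₀ ℝ) → ℝ} (hf : ∀ y, f y ≤ l1Norm y) (x : Vec k →₀ ℝ) :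
    θ * ∑ i, f (restrict (E i) x) ≤ l1Norm x := by
  calc θ * ∑ i, f (restrict (E i) x)
      ≤ θ * ∑ i, l1Norm (restrict (E i) x) := by gcongr with i; exact hf _
    _ ≤ θ * l1Norm x := by gcongr; exact sum_l1Norm_filter_mem_le hE x
    _ ≤ l1Norm x := mul_le_of_le_one_left (l1Norm_nonneg x) hθ1

end Restrict

namespace NormSeq

variable {k d : ℕ} {θ : ℝ}

lemma nonneg : ∀ j (x : Vec k →₀ ℝ), 0 ≤ normSeq k d θ j x
  | 0, _ => Real.iSup_nonneg fun _ => abs_nonneg _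
  | j + 1, x => (nonneg j x).trans (le_max_left _ _)

lemma le_succ (j : ℕ) (x : Vec k →₀ ℝ) : normSeq k d θ j x ≤ normSeq k d θ (j + 1) x :=
  le_max_left _ _

lemma succ_le {j : ℕ} {x : Vec k →₀ ℝ} {c : ℝ} (hc : normSeq k d θ j x ≤ c)
    (h : ∀ m, 1 ≤ m → ∀ E : Fin m → Finset (Vec k), Admissible k d E →
      θ * ∑ i, normSeq k d θ j (restrict (E i) x) ≤ c) :
    normSeq k d θ (j + 1) x ≤ c :=
  max_le hc <| Real.sSup_le (by rintro _ ⟨m, hm, E, hE, rfl⟩; exact h m hm E hE)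
    ((nonneg j x).trans hc)

lemma le_l1Norm (hθ0 : 0 ≤ θ) (hθ1 : θ ≤ 1) :
    ∀ j (x : Vec k →₀ ℝ), normSeq k d θ j x ≤ l1Norm x
  | 0, x => Real.iSup_le (abs_apply_le_l1Norm x) (l1Norm_nonneg x)
  | j + 1, x => succ_le (le_l1Norm hθ0 hθ1 j x) fun _ _ _ hE =>
      mul_sum_restrict_le_l1Norm hE.pairwise_disjoint hθ0 hθ1 (le_l1Norm hθ0 hθ1 j) x

lemma mul_sum_le_succ (hθ0 : 0 ≤ θ) (hθ1 : θ ≤ 1) {j m : ℕ} (hm : 1 ≤ m)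
    {E : Fin m → Finset (Vec k)} (hE : Admissible k d E) (x : Vec k →₀ ℝ) :
    θ * ∑ i, normSeq k d θ j (restrict (E i) x) ≤ normSeq k d θ (j + 1) x := by
  refine le_max_of_le_right (le_csSup ⟨l1Norm x, ?_⟩ ⟨m, hm, E, hE, rfl⟩)
  rintro _ ⟨m', -, E', hE', rfl⟩
  exact mul_sum_restrict_le_l1Norm hE'.pairwise_disjoint hθ0 hθ1 (le_l1Norm hθ0 hθ1 j) x

lemma apply_zero (hθ0 : 0 ≤ θ) (hθ1 : θ ≤ 1) (j : ℕ) : normSeq k d θ j 0 = 0 :=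
  le_antisymm ((le_l1Norm hθ0 hθ1 j 0).trans_eq l1Norm_zero) (nonneg j 0)

theorem succ_eq_of_card_support_le (hθ0 : 0 ≤ θ) (hθ1 : θ ≤ 1) :
    ∀ j (x : Vec k →₀ ℝ), x.support.card ≤ j → normSeq k d θ (j + 1) x = normSeq k d θ j x
  | 0, x, hx => by
    rw [Nat.le_zero, Finset.card_eq_zero, Finsupp.support_eq_empty] at hx
    rw [hx, apply_zero hθ0 hθ1, apply_zero hθ0 hθ1]
  | j + 1, x, hx => by
    refine le_antisymm (succ_le le_rfl fun m hm E hE => ?_) (le_succ _ x)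
    by_cases hcov : ∃ i, x.support ⊆ E i
    · obtain ⟨i, hi⟩ := hcov
      rw [sum_restrict_eq_of_support_subset hE.pairwise_disjoint (apply_zero hθ0 hθ1 _) hi]
      exact mul_le_of_le_one_left (nonneg _ x) hθ1
    · have hpieces : ∀ i, normSeq k d θ (j + 1) (restrict (E i) x) =
          normSeq k d θ j (restrict (E i) x) := fun i =>
        succ_eq_of_card_support_le hθ0 hθ1 j _ <| by
          have := card_support_restrict_lt fun h => hcov ⟨i, h⟩
          omega
      simp only [hpieces]
      exact mul_sum_le_succ hθ0 hθ1 hm hE x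

end NormSeq

theorem normSeq_stabilizes_general (k d : ℕ) (θ : ℝ) (hθ0 : 0 < θ) (hθ1 : θ < 1)
    (x : Vec k →₀ ℝ) (n : ℕ) (hn : x.support.card = n) :
    ∀ m, n ≤ m → normSeq k d θ m x = normSeq k d θ n x := by
  intro m hm
  induction m, hm using Nat.le_induction with
  | base => rfl
  | succ m hnm ih =>
    rw [NormSeq.succ_eq_of_card_support_le hθ0.le hθ1.le m x (hn ▸ hnm), ih]

/-- if `|supp x| = n` then the sequence of norms stabilizes at stage `n`. -/
theorem normSeq_stabilizes (k d : ℕ) (hd : 1 ≤ d) (θ : ℝ) (hθ0 : 0 < θ) (hθ1 : θ < 1)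
    (x : Vec k →₀ ℝ) (n : ℕ) (hn : x.support.card = n) :
    ∀ m, n ≤ m → normSeq k d θ m x = normSeq k d θ n x :=
  normSeq_stabilizes_general k d θ hθ0 hθ1 x n hn
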